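/- arXiv:2209.05415 — 2 statements merged into one kernel-verified Lean document; each statement's English description precedes it below -/
import Mathlib

section
/- Let ψ: ℝⁿ → [0,∞) be a positively 1-homogeneous function which vanishes only at the origin and is strictly convex in the sense of Reshetnyak, and let g: ℝ → ℝ be strictly convex and increasing. Then G := g ∘ ψ is strictly convex, i.e., G(λp + (1−λ)q) < λG(p) + (1−λ)G(q) for all λ ∈ (0,1) and all distinct p, q ∈ ℝⁿ. -/
open Set
noncomputable section

abbrev Eu (n : ℕ) := EuclideanSpace ℝ (Fin n)

lemma strictMono_of_strictConvex_mono (g : ℝ → ℝ)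
    (hgconv : StrictConvexOn ℝ Set.univ g) (hgmono : Monotone g) :
    StrictMono g := by
  intro x y hxy
  have hmid : g ((1/2 : ℝ) * x + (1/2 : ℝ) * y) < (1/2) * g x + (1/2) * g y := by
    have := hgconv.2 (mem_univ x) (mem_univ y) (ne_of_lt hxy)
      (by norm_num : (0:ℝ) < 1/2) (by norm_num : (0:ℝ) < 1/2) (by norm_num)
    simpa [smul_eq_mul] using this
  have hxm : g x ≤ g ((1/2 : ℝ) * x + (1/2 : ℝ) * y) := hgmono (by linarith)
  have hmy : g ((1/2 : ℝ) * x + (1/2 : ℝ) * y) ≤ g y := hgmono (by linarith)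
  linarith

/-- **Lemma 2.9, first part.** Let `ψ : ℝⁿ → [0,∞)` be positively 1-homogeneous,
vanishing only at the origin, subadditive, and strictly convex in the sense of
Reshetnyak (equality in `ψ(p+q) ≤ ψ(p)+ψ(q)` only if `p = 0` or `q = t p`, `t ≥ 0`),
and let `g : ℝ → ℝ` be strictly convex and increasing. Then `G = g ∘ ψ` is strictly
convex. -/
theorem stmt7 {n : ℕ} (ψ : Eu n → ℝ)
    (hnn : ∀ p, 0 ≤ ψ p)
    (hhomo : ∀ t : ℝ, 0 ≤ t → ∀ p, ψ (t • p) = t * ψ p)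
    (hvan : ∀ p, ψ p = 0 → p = 0)
    (hsub : ∀ p q : Eu n, ψ (p + q) ≤ ψ p + ψ q)
    (hres : ∀ p q : Eu n, ψ (p + q) = ψ p + ψ q → p = 0 ∨ ∃ t : ℝ, 0 ≤ t ∧ q = t • p)
    (g : ℝ → ℝ) (hgconv : StrictConvexOn ℝ Set.univ g) (hgmono : Monotone g) :
    ∀ p q : Eu n, p ≠ q → ∀ lam : ℝ, 0 < lam → lam < 1 →
      g (ψ (lam • p + (1 - lam) • q)) < lam * g (ψ p) + (1 - lam) * g (ψ q) := by
  intro p q hpq lam hl0 hl1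
  have hgs : StrictMono g := strictMono_of_strictConvex_mono g hgconv hgmono
  have hl0' : (0:ℝ) ≤ lam := le_of_lt hl0
  have hl1' : (0:ℝ) ≤ 1 - lam := by linarith
  have hψp := hhomo lam hl0' p
  have hψq := hhomo (1 - lam) hl1' q
  have hsub' : ψ (lam • p + (1 - lam) • q) ≤ lam * ψ p + (1 - lam) * ψ q := by
    calc ψ (lam • p + (1 - lam) • q) ≤ ψ (lam • p) + ψ ((1 - lam) • q) := hsub _ _
      _ = lam * ψ p + (1 - lam) * ψ q := by rw [hψp, hψq]
  by_cases hab : ψ p = ψ q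
  · -- ψ p = ψ q, both positive
    have hpne : p ≠ 0 ∨ q ≠ 0 := by
      by_contra h
      push_neg at h
      exact hpq (h.1.trans h.2.symm)
    have ha0 : 0 < ψ p := by
      rcases lt_or_eq_of_le (hnn p) with h | h
      · exact h
      · exfalso
        have hp0 : p = 0 := hvan p h.symm
        have hq0 : q = 0 := hvan q (hab ▸ h.symm)
        exact hpq (hp0.trans hq0.symm)
    rcases lt_or_eq_of_le hsub' with hlt | heq
    · have : g (ψ (lam • p + (1 - lam) • q)) < g (lam * ψ p + (1 - lam) * ψ q) := hgs hlt
      calc g (ψ (lam • p + (1 - lam) • q)) < g (lam * ψ p + (1 - lam) * ψ q) := this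
        _ = lam * g (ψ p) + (1 - lam) * g (ψ q) := by
            rw [← hab]
            have : lam * ψ p + (1 - lam) * ψ p = ψ p := by ring
            rw [this]; ring
    · -- equality case: contradiction
      exfalso
      have heq2 : ψ (lam • p + (1 - lam) • q) = ψ (lam • p) + ψ ((1 - lam) • q) := by
        rw [hψp, hψq]; exact heq
      rcases hres _ _ heq2 with h0 | ⟨t, ht0, htq⟩
      · have hp0 : p = 0 := by
          rcases smul_eq_zero.mp h0 with h | h
          · exact absurd h (ne_of_gt hl0)
          · exact h
        have h00 : ψ (0 : Eu n) = 0 := by simpa using hhomo 0 le_rfl 0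
        rw [hp0, h00] at ha0
        exact lt_irrefl 0 ha0
      · -- q = (t * lam / (1 - lam)) • p
        have hql : q = (t * lam / (1 - lam)) • p := by
          have h1 : (1 - lam) • q = (t * lam) • p := by
            rw [htq, smul_smul]
          have h2 : ((1 - lam)⁻¹ * (1 - lam)) • q = ((1 - lam)⁻¹ * (t * lam)) • p := by
            rw [mul_smul, mul_smul, h1]
          rw [inv_mul_cancel₀ (by linarith : (1:ℝ) - lam ≠ 0), one_smul] at h2
          rw [h2, div_eq_inv_mul]
        set s : ℝ := t * lam / (1 - lam) with hs
        have hs0 : 0 ≤ s := by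
          apply div_nonneg (mul_nonneg ht0 hl0') (by linarith)
        have hψq' : ψ q = s * ψ p := by rw [hql, hhomo s hs0]
        have hs1 : s = 1 := by
          rw [hψq'] at hab
          have := mul_right_cancel₀ (ne_of_gt ha0) (by linarith : s * ψ p = 1 * ψ p)
          linarith [this]
        exact hpq (by rw [hql, hs1, one_smul])
  · -- ψ p ≠ ψ q: use strict convexity of g
    have h1 : g (ψ (lam • p + (1 - lam) • q)) ≤ g (lam * ψ p + (1 - lam) * ψ q) :=
      hgmono hsub'
    have h2 : g (lam * ψ p + (1 - lam) * ψ q) < lam * g (ψ p) + (1 - lam) * g (ψ q) := by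
      have := hgconv.2 (mem_univ (ψ p)) (mem_univ (ψ q)) hab hl0
        (show (0:ℝ) < 1 - lam by linarith) (by ring)
      simpa [smul_eq_mul] using this
    linarith

end
end

section
/- Let η > 0 and let ψ: ℝⁿ → [0,∞) be an anisotropy of class C^∞ on ℝⁿ \ {0} satisfying D²((1/2) ψ²) ≥ η·Id on ℝⁿ \ {0}. Then there exists a convex function Ψ ∈ C²(ℝⁿ) such that Ψ = ψ² on ℝⁿ \ B_η(0). -/
open Set Filter Topology Metric
noncomputable section

/-- An anisotropy: a convex, nonnegative, positively 1-homogeneous function on ℝⁿ. -/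
def IsAnisotropy {n : ℕ} (ψ : Eu n → ℝ) : Prop :=
  ConvexOn ℝ Set.univ ψ ∧ (∀ p, 0 ≤ ψ p) ∧
    ∀ t : ℝ, 0 ≤ t → ∀ p, ψ (t • p) = t * ψ p

open intervalIntegral in
lemma theta_exists (a : ℝ) (ha : 0 < a) :
    ∃ θ : ℝ → ℝ, Monotone θ ∧ ConvexOn ℝ univ θ ∧ ContDiff ℝ 2 θ ∧
      (∀ t ≤ a / 2, θ t = 0) ∧ (∀ t, a ≤ t → θ t = θ a + (t - a)) := by
  set δ := a / 2 with hδ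
  set q : ℝ → ℝ := fun s => Real.smoothTransition ((s - δ) * (4 / a)) *
      Real.smoothTransition ((a - s) * (4 / a)) with hq
  have hqc : Continuous q := by
    apply Continuous.mul <;> exact Real.smoothTransition.continuous.comp (by continuity)
  have hqnn : ∀ s, 0 ≤ q s := fun s =>
    mul_nonneg (Real.smoothTransition.nonneg _) (Real.smoothTransition.nonneg _)
  have hq0 : ∀ s ≤ δ, q s = 0 := by
    intro s hs
    have : Real.smoothTransition ((s - δ) * (4 / a)) = 0 :=
      Real.smoothTransition.zero_of_nonpos
        (mul_nonpos_of_nonpos_of_nonneg (by linarith) (by positivity))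
    simp [hq, this]
  have hq1 : ∀ s, a ≤ s → q s = 0 := by
    intro s hs
    have : Real.smoothTransition ((a - s) * (4 / a)) = 0 :=
      Real.smoothTransition.zero_of_nonpos
        (mul_nonpos_of_nonpos_of_nonneg (by linarith) (by positivity))
    simp [hq, this]
  set N : ℝ := ∫ s in δ..a, q s with hN
  have hδa : δ < a := by simp [hδ]; linarith
  have hNpos : 0 < N := by
    apply intervalIntegral_pos_of_pos_on (hqc.intervalIntegrable δ a) _ hδa
    intro x hx
    apply mul_pos
    · exact Real.smoothTransition.pos_of_pos (mul_pos (by linarith [hx.1]) (by positivity))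
    · exact Real.smoothTransition.pos_of_pos (mul_pos (by linarith [hx.2]) (by positivity))
  set r : ℝ → ℝ := fun s => N⁻¹ * ∫ t in δ..s, q t with hr
  have hrd : ∀ s, HasDerivAt r (N⁻¹ * q s) s := fun s =>
    ((hqc.integral_hasStrictDerivAt δ s).hasDerivAt).const_mul N⁻¹
  have hrdiff : Differentiable ℝ r := fun s => (hrd s).differentiableAt
  have hrderiv : deriv r = fun s => N⁻¹ * q s := funext fun s => (hrd s).deriv
  have hrc : Continuous r := hrdiff.continuous
  have hr0 : ∀ s ≤ δ, r s = 0 := by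
    intro s hs
    have : ∫ t in δ..s, q t = 0 := by
      rw [integral_congr (g := fun _ => 0) ?_, integral_zero]
      intro t ht
      rw [uIcc_of_ge hs] at ht
      exact hq0 t ht.2
    simp [hr, this]
  have hr1 : ∀ s, a ≤ s → r s = 1 := by
    intro s hs
    have h2 : ∫ t in a..s, q t = 0 := by
      rw [integral_congr (g := fun _ => 0) ?_, integral_zero]
      intro t ht
      rw [uIcc_of_le hs] at ht
      exact hq1 t ht.1
    have h3 : ∫ t in δ..s, q t = N := by
      rw [← integral_add_adjacent_intervals (hqc.intervalIntegrable δ a)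
        (hqc.intervalIntegrable a s), h2, add_zero]
    rw [hr]
    simp only [h3]
    field_simp
  have hrnn : ∀ s, 0 ≤ r s := by
    intro s
    rcases le_or_gt s δ with h | h
    · rw [hr0 s h]
    · exact mul_nonneg (by positivity) (integral_nonneg h.le fun t _ => hqnn t)
  have hrmono : Monotone r := by
    apply monotone_of_deriv_nonneg hrdiff
    intro s
    rw [hrderiv]
    exact mul_nonneg (by positivity) (hqnn s)
  set θ : ℝ → ℝ := fun t => ∫ s in (0:ℝ)..t, r s with hθ
  have hθd : ∀ t, HasDerivAt θ (r t) t := fun t => (hrc.integral_hasStrictDerivAt 0 t).hasDerivAt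
  have hθdiff : Differentiable ℝ θ := fun t => (hθd t).differentiableAt
  have hθderiv : deriv θ = r := funext fun t => (hθd t).deriv
  refine ⟨θ, ?_, ?_, ?_, ?_, ?_⟩
  · exact monotone_of_deriv_nonneg hθdiff (fun t => hθderiv ▸ hrnn t)
  · exact Monotone.convexOn_univ_of_deriv hθdiff (hθderiv ▸ hrmono)
  · rw [show (2 : WithTop ℕ∞) = 1 + 1 by norm_num, contDiff_succ_iff_deriv]
    refine ⟨hθdiff, by simp, ?_⟩
    rw [hθderiv, show (1 : WithTop ℕ∞) = 0 + 1 by norm_num, contDiff_succ_iff_deriv]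
    exact ⟨hrdiff, by simp, contDiff_zero.2 (by rw [hrderiv]; exact continuous_const.mul hqc)⟩
  · intro t ht
    show (∫ s in (0:ℝ)..t, r s) = 0
    rw [integral_congr (g := fun _ => 0) ?_, integral_zero]
    intro s hs
    apply hr0
    rcases Set.mem_uIcc.1 hs with h | h
    · linarith [h.1, h.2]
    · linarith [h.1, h.2, ha]
  · intro t ht
    have hsplit : (∫ s in (0:ℝ)..a, r s) + ∫ s in a..t, r s = θ t :=
      integral_add_adjacent_intervals (hrc.intervalIntegrable 0 a) (hrc.intervalIntegrable a t)
    have hone : ∫ s in a..t, r s = t - a := by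
      rw [integral_congr (g := fun _ => (1:ℝ)) ?_, integral_const]
      · simp
      · intro s hs
        rw [uIcc_of_le ht] at hs
        exact hr1 s hs.1
    have : θ a = ∫ s in (0:ℝ)..a, r s := rfl
    rw [this]
    linarith [hsplit, hone]

lemma key_lower {n : ℕ} (η : ℝ)
    (ψ : Eu n → ℝ) (hψ : IsAnisotropy ψ)
    (hsm : ContDiffOn ℝ (⊤ : ℕ∞) ψ {(0 : Eu n)}ᶜ)
    (hhess : ∀ p : Eu n, p ≠ 0 → ∀ v : Eu n,
      η * ‖v‖ ^ 2 ≤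
        iteratedFDeriv ℝ 2 (fun q => (1 / 2 : ℝ) * (ψ q) ^ 2) p ![v, v])
    (p : Eu n) (hp : p ≠ 0) : η * ‖p‖ ^ 2 ≤ ψ p ^ 2 := by
  set f : Eu n → ℝ := fun q => (1 / 2 : ℝ) * (ψ q) ^ 2 with hf
  have hfC : ContDiffOn ℝ 2 f {(0 : Eu n)}ᶜ :=
    contDiffOn_const.mul ((hsm.of_le (by exact WithTop.coe_le_coe.2 le_top)).pow 2)
  set c : ℝ →L[ℝ] Eu n := ContinuousLinearMap.toSpanSingleton ℝ p with hc
  have hcp : ∀ t : ℝ, c t = t • p := fun t => rfl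
  have hc1 : c 1 = p := by rw [hcp]; simp
  have hpre : c ⁻¹' ({(0 : Eu n)}ᶜ) = {(0 : ℝ)}ᶜ := by
    ext t
    simp [hcp, smul_eq_zero, hp]
  have hopen1 : IsOpen ({(0 : Eu n)}ᶜ) := isOpen_compl_singleton
  have hopen2 : IsOpen ({(0 : ℝ)}ᶜ) := isOpen_compl_singleton
  have hmem1 : p ∈ ({(0 : Eu n)}ᶜ : Set (Eu n)) := by simpa using hp
  have hmem2 : (1 : ℝ) ∈ ({(0 : ℝ)}ᶜ : Set ℝ) := by norm_num
  have h1 : iteratedFDerivWithin ℝ 2 (f ∘ c) ({(0 : ℝ)}ᶜ) 1 =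
      (iteratedFDerivWithin ℝ 2 f ({(0 : Eu n)}ᶜ) p).compContinuousLinearMap fun _ => c := by
    have := c.iteratedFDerivWithin_comp_right (f := f) hfC hopen1.uniqueDiffOn
      (by rw [hpre]; exact hopen2.uniqueDiffOn) (x := 1) (by rw [hc1]; exact hmem1) (le_refl 2)
    rwa [hpre, hc1] at this
  have h2 : iteratedFDeriv ℝ 2 (f ∘ c) 1 ![1, 1] = iteratedFDeriv ℝ 2 f p ![p, p] := by
    rw [← iteratedFDerivWithin_of_isOpen 2 hopen2 hmem2, h1,
      ContinuousMultilinearMap.compContinuousLinearMap_apply,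
      iteratedFDerivWithin_of_isOpen 2 hopen1 hmem1]
    congr 1
    funext i
    fin_cases i <;> simp [hc1]
  set A : ℝ := (1 / 2 : ℝ) * ψ p ^ 2 with hA
  set G : ℝ → ℝ := fun t => A * t ^ 2 with hG
  have hEq : EqOn (f ∘ c) G (Ioi (0 : ℝ)) := by
    intro t ht
    simp only [Function.comp_apply, hcp, hf, hG, hA]
    rw [hψ.2.2 t (le_of_lt ht) p]
    ring
  have h3 : iteratedFDeriv ℝ 2 (f ∘ c) 1 = iteratedFDeriv ℝ 2 G 1 := by
    have hm : (1 : ℝ) ∈ Ioi (0 : ℝ) := by norm_num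
    rw [← iteratedFDerivWithin_of_isOpen 2 isOpen_Ioi hm,
      ← iteratedFDerivWithin_of_isOpen (f := G) 2 isOpen_Ioi hm]
    exact hEq.iteratedFDerivWithin 2 hm
  have h4 : iteratedFDeriv ℝ 2 G 1 ![1, 1] = ψ p ^ 2 := by
    have hv : ![(1 : ℝ), 1] = fun _ : Fin 2 => (1 : ℝ) := by
      funext i; fin_cases i <;> rfl
    rw [hv, ← iteratedDeriv_eq_iteratedFDeriv]
    have hd1 : deriv G = fun t => A * (2 * t) := by
      funext t
      have ht : HasDerivAt G (A * (2 * t ^ 1)) t := (hasDerivAt_pow 2 t).const_mul A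
      rw [ht.deriv]; ring
    rw [iteratedDeriv_succ, iteratedDeriv_one, hd1]
    have : deriv (fun t : ℝ => A * (2 * t)) 1 = A * 2 := by
      have ht : HasDerivAt (fun t : ℝ => A * (2 * t)) (A * (2 * 1)) 1 :=
        ((hasDerivAt_id (1:ℝ)).const_mul 2).const_mul A
      rw [ht.deriv]; ring
    rw [this, hA]; ring
  have := hhess p hp p
  rw [← h2, h3, h4] at this
  exact this

/-- **Lemma 2.13.** Let `η > 0` and let `ψ : ℝⁿ → [0,∞)` be an anisotropy of class
`C^∞` on `ℝⁿ \ {0}` with `D²((1/2)ψ²) ≥ η·Id` there. Then there exists a convex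
function `Ψ ∈ C²(ℝⁿ)` which equals `ψ²` outside the ball `B_η(0)`. -/
theorem stmt12 {n : ℕ} (η : ℝ) (hη : 0 < η)
    (ψ : Eu n → ℝ) (hψ : IsAnisotropy ψ)
    (hsm : ContDiffOn ℝ (⊤ : ℕ∞) ψ {(0 : Eu n)}ᶜ)
    (hhess : ∀ p : Eu n, p ≠ 0 → ∀ v : Eu n,
      η * ‖v‖ ^ 2 ≤
        iteratedFDeriv ℝ 2 (fun q => (1 / 2 : ℝ) * (ψ q) ^ 2) p ![v, v]) :
    ∃ Ψ : Eu n → ℝ, ConvexOn ℝ Set.univ Ψ ∧ ContDiff ℝ 2 Ψ ∧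
      ∀ p : Eu n, p ∉ ball (0 : Eu n) η → Ψ p = (ψ p) ^ 2 := by
  have hkey : ∀ p : Eu n, p ≠ 0 → η * ‖p‖ ^ 2 ≤ ψ p ^ 2 :=
    key_lower η ψ hψ hsm hhess
  have hψ0 : ψ 0 = 0 := by
    have := hψ.2.2 0 le_rfl 0
    simpa using this
  have hψcont : Continuous ψ := hψ.1.locallyLipschitz.continuous
  have hFc : Continuous fun p : Eu n => ψ p ^ 2 := hψcont.pow 2
  set a : ℝ := η ^ 3 with haa
  have ha : 0 < a := by positivity
  obtain ⟨θ, hθmono, hθconv, hθC2, hθ0, hθid⟩ := theta_exists a ha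
  set C : ℝ := a - θ a with hC
  refine ⟨fun p => θ (ψ p ^ 2) + C, ?_, ?_, ?_⟩
  · -- convexity
    refine ⟨convex_univ, ?_⟩
    intro x _ y _ b c hb hc hbc
    have h1 : ψ (b • x + c • y) ^ 2 ≤ b * ψ x ^ 2 + c * ψ y ^ 2 := by
      have hconv : ψ (b • x + c • y) ≤ b * ψ x + c * ψ y := by
        simpa [smul_eq_mul] using hψ.1.2 (mem_univ x) (mem_univ y) hb hc hbc
      have h1' : ψ (b • x + c • y) ^ 2 ≤ (b * ψ x + c * ψ y) ^ 2 :=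
        pow_le_pow_left₀ (hψ.2.1 _) hconv 2
      nlinarith [h1', mul_nonneg (mul_nonneg hb hc) (sq_nonneg (ψ x - ψ y)), hbc]
    have h2 : θ (ψ (b • x + c • y) ^ 2) ≤ θ (b * ψ x ^ 2 + c * ψ y ^ 2) := hθmono h1
    have h3 : θ (b * ψ x ^ 2 + c * ψ y ^ 2) ≤ b * θ (ψ x ^ 2) + c * θ (ψ y ^ 2) := by
      simpa [smul_eq_mul] using
        hθconv.2 (mem_univ (ψ x ^ 2)) (mem_univ (ψ y ^ 2)) hb hc hbc
    have hCC : b * C + c * C = C := by rw [← add_mul, hbc, one_mul]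
    simp only [smul_eq_mul]
    nlinarith [h2, h3, hCC]
  · -- smoothness
    rw [contDiff_iff_contDiffAt]
    intro p
    by_cases hp : p = 0
    · subst hp
      have h0 : Tendsto (fun p : Eu n => ψ p ^ 2) (𝓝 0) (𝓝 0) := by
        have := hFc.continuousAt (x := (0 : Eu n))
        rwa [ContinuousAt, hψ0, zero_pow (by norm_num)] at this
      have hev : (fun p : Eu n => ψ p ^ 2) ⁻¹' Iio (a / 2) ∈ 𝓝 (0 : Eu n) :=
        h0 (Iio_mem_nhds (by positivity))
      have heq : (fun p : Eu n => θ (ψ p ^ 2) + C) =ᶠ[𝓝 (0 : Eu n)] fun _ => C := by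
        filter_upwards [hev] with p hp
        rw [hθ0 _ (le_of_lt hp), zero_add]
      exact (contDiffAt_const (c := C)).congr_of_eventuallyEq heq
    · have hψp : ContDiffAt ℝ 2 ψ p :=
        (hsm.contDiffAt (isOpen_compl_singleton.mem_nhds (by simpa using hp))).of_le (by exact WithTop.coe_le_coe.2 le_top)
      exact ((hθC2.contDiffAt.comp p (hψp.pow 2)).add contDiffAt_const)
  · -- equality outside the ball
    intro p hpb
    have hnorm : η ≤ ‖p‖ := by
      simpa [mem_ball, dist_zero_right] using hpb
    have hp0 : p ≠ 0 := by
      intro h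
      rw [h, norm_zero] at hnorm
      linarith
    have hge : a ≤ ψ p ^ 2 := by
      have h1 : a ≤ η * ‖p‖ ^ 2 := by
        rw [haa]
        have h2 : η ^ 2 ≤ ‖p‖ ^ 2 := pow_le_pow_left₀ hη.le hnorm 2
        nlinarith [h2, hη]
      exact h1.trans (hkey p hp0)
    show θ (ψ p ^ 2) + C = ψ p ^ 2
    rw [hθid _ hge, hC]
    ring

end
end
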